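/- arXiv:2307.16454 — 3 statements merged into one kernel-verified Lean document; each statement's English description precedes it below -/
import Mathlib

section
/- For every integer p ≥ 2, the (p−1)×(p−1) symmetric integer matrix with diagonal (−2,…,−2,−p−2), off-diagonal neighbors 1, and zeros elsewhere is negative definite. -/
open Matrix

/-- The intersection matrix of the linear plumbing `C_p`: the
`(p-1) × (p-1)` symmetric integer matrix with diagonal
`(-2, …, -2, -p-2)`, super/subdiagonal entries `1`, zeros elsewhere. -/
def Cmatrix (p : ℕ) : Matrix (Fin (p - 1)) (Fin (p - 1)) ℤ :=
  Matrix.of fun i j =>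
    if i = j then (if i.val = p - 2 then -(p : ℤ) - 2 else -2)
    else if i.val + 1 = j.val ∨ j.val + 1 = i.val then 1 else 0

/-- Sum-of-squares identity for the tridiagonal quadratic form with diagonal
`(-2, …, -2, -c-2)` and off-diagonal neighbours `1`. -/
lemma Cmatrix_key : ∀ n, 1 ≤ n → ∀ (c : ℝ) (y : ℕ → ℝ),
    (∑ i ∈ Finset.range n, ∑ j ∈ Finset.range n,
      y i * ((if i = j then (if i = n - 1 then -c - 2 else (-2:ℝ))
        else if i + 1 = j ∨ j + 1 = i then (1:ℝ) else 0) * y j))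
    = -(y 0)^2 - (∑ i ∈ Finset.range (n-1), (y i - y (i+1))^2)
      - (c+1) * (y (n-1))^2 := by
  intro n hn
  induction n, hn using Nat.le_induction with
  | base =>
    intro c y
    simp
    ring
  | succ n hn ih =>
    intro c y
    simp only [Nat.add_sub_cancel, Finset.sum_range_succ, Finset.sum_add_distrib, if_true,
      eq_self_iff_true]
    have hA : (∑ i ∈ Finset.range n, ∑ j ∈ Finset.range n,
        y i * ((if i = j then (if i = n then -c - 2 else (-2:ℝ))
          else if i + 1 = j ∨ j + 1 = i then (1:ℝ) else 0) * y j))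
        = (∑ i ∈ Finset.range n, ∑ j ∈ Finset.range n,
        y i * ((if i = j then (if i = n - 1 then -(0:ℝ) - 2 else (-2:ℝ))
          else if i + 1 = j ∨ j + 1 = i then (1:ℝ) else 0) * y j)) := by
      refine Finset.sum_congr rfl fun i hi => Finset.sum_congr rfl fun j hj => ?_
      simp only [Finset.mem_range] at hi hj
      by_cases h : i = j
      · have h1 : j ≠ n := by omega
        simp only [h, if_pos rfl]
        rw [if_neg h1]
        split_ifs <;> norm_num
      · simp [h]
    have hB : (∑ i ∈ Finset.range n,
        y i * ((if i = n then (if i = n then -c - 2 else (-2:ℝ))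
          else if i + 1 = n ∨ n + 1 = i then (1:ℝ) else 0) * y n))
        = y (n-1) * y n := by
      have key2 : ∀ i ∈ Finset.range n,
          y i * ((if i = n then (if i = n then -c - 2 else (-2:ℝ))
            else if i + 1 = n ∨ n + 1 = i then (1:ℝ) else 0) * y n)
          = if i = n - 1 then y i * y n else 0 := by
        intro i hi
        simp only [Finset.mem_range] at hi
        have h1 : i ≠ n := by omega
        rw [if_neg h1]
        by_cases h : i + 1 = n
        · rw [if_pos (Or.inl h), if_pos (by omega : i = n - 1)]
          ring
        · rw [if_neg (by omega : ¬(i + 1 = n ∨ n + 1 = i)),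
            if_neg (by omega : ¬ i = n - 1)]
          ring
      rw [Finset.sum_congr rfl key2, Finset.sum_ite_eq' (Finset.range n) (n-1)]
      rw [if_pos (Finset.mem_range.mpr (by omega : n - 1 < n))]
    have hC : (∑ j ∈ Finset.range n,
        y n * ((if n = j then -c - 2
          else if n + 1 = j ∨ j + 1 = n then (1:ℝ) else 0) * y j))
        = y n * y (n-1) := by
      have key2 : ∀ j ∈ Finset.range n,
          y n * ((if n = j then -c - 2
            else if n + 1 = j ∨ j + 1 = n then (1:ℝ) else 0) * y j)
          = if j = n - 1 then y n * y j else 0 := by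
        intro j hj
        simp only [Finset.mem_range] at hj
        have h1 : n ≠ j := by omega
        rw [if_neg h1]
        by_cases h : j + 1 = n
        · rw [if_pos (Or.inr h), if_pos (by omega : j = n - 1)]
          ring
        · rw [if_neg (by omega : ¬(n + 1 = j ∨ j + 1 = n)),
            if_neg (by omega : ¬ j = n - 1)]
          ring
      rw [Finset.sum_congr rfl key2, Finset.sum_ite_eq' (Finset.range n) (n-1)]
      rw [if_pos (Finset.mem_range.mpr (by omega : n - 1 < n))]
    have hsplit : (∑ i ∈ Finset.range n, (y i - y (i+1))^2)
        = (∑ i ∈ Finset.range (n-1), (y i - y (i+1))^2) + (y (n-1) - y n)^2 := by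
      have e : n - 1 + 1 = n := by omega
      rw [show (y (n-1) - y n)^2 = (y (n-1) - y ((n-1)+1))^2 by rw [e],
        ← Finset.sum_range_succ, e]
    rw [hA, hB, hC, ih 0 y, hsplit]
    ring

/-- For every integer `p ≥ 2`, the intersection matrix of `C_p` is
negative definite. -/
theorem stmt4 (p : ℕ) (hp : 2 ≤ p) :
    ∀ x : Fin (p - 1) → ℝ, x ≠ 0 →
      x ⬝ᵥ (((Cmatrix p).map (Int.cast : ℤ → ℝ)) *ᵥ x) < 0 := by
  intro x hx
  have hn1 : 1 ≤ p - 1 := by omega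
  set y : ℕ → ℝ := fun i => if h : i < p - 1 then x ⟨i, h⟩ else 0 with hy
  have hxy : ∀ i : Fin (p - 1), x i = y i.val := by
    intro i
    simp [hy, i.isLt]
  have hM : ∀ i j : Fin (p - 1), ((Cmatrix p).map (Int.cast : ℤ → ℝ)) i j
      = (if (i:ℕ) = (j:ℕ) then (if (i:ℕ) = p - 1 - 1 then -(p:ℝ) - 2 else -2)
        else if (i:ℕ) + 1 = (j:ℕ) ∨ (j:ℕ) + 1 = (i:ℕ) then 1 else 0) := by
    intro i j
    have h2 : p - 2 = p - 1 - 1 := by omega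
    simp only [Matrix.map_apply, Cmatrix, Matrix.of_apply, h2, Fin.ext_iff]
    split_ifs <;> push_cast <;> ring
  have hQ : x ⬝ᵥ (((Cmatrix p).map (Int.cast : ℤ → ℝ)) *ᵥ x)
      = ∑ i ∈ Finset.range (p - 1), ∑ j ∈ Finset.range (p - 1),
        y i * ((if i = j then (if i = p - 1 - 1 then -(p:ℝ) - 2 else -2)
          else if i + 1 = j ∨ j + 1 = i then 1 else 0) * y j) := by
    rw [dotProduct]
    rw [← Fin.sum_univ_eq_sum_range (fun i => ∑ j ∈ Finset.range (p - 1),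
        y i * ((if i = j then (if i = p - 1 - 1 then -(p:ℝ) - 2 else -2)
          else if i + 1 = j ∨ j + 1 = i then 1 else 0) * y j)) (p - 1)]
    refine Finset.sum_congr rfl fun i _ => ?_
    rw [Matrix.mulVec, dotProduct, Finset.mul_sum,
      ← Fin.sum_univ_eq_sum_range (fun j =>
        y i * ((if (i:ℕ) = j then (if (i:ℕ) = p - 1 - 1 then -(p:ℝ) - 2 else -2)
          else if (i:ℕ) + 1 = j ∨ j + 1 = (i:ℕ) then 1 else 0) * y j)) (p - 1)]
    refine Finset.sum_congr rfl fun j _ => ?_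
    rw [hM i j, hxy i, hxy j]
  rw [hQ, Cmatrix_key (p - 1) hn1 (p:ℝ) y]
  have hS : 0 ≤ ∑ i ∈ Finset.range (p - 1 - 1), (y i - y (i+1))^2 :=
    Finset.sum_nonneg fun i _ => sq_nonneg _
  have hlast : (0:ℝ) ≤ ((p:ℝ)+1) * (y (p - 1 - 1))^2 := by positivity
  by_contra hcon
  push_neg at hcon
  have h0 : y 0 = 0 := by
    have h1 : (y 0)^2 ≤ 0 := by linarith
    have h2 := sq_nonneg (y 0)
    have h3 : (y 0)^2 = 0 := le_antisymm h1 h2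
    exact pow_eq_zero_iff (by norm_num) |>.mp h3
  have hSz : ∀ i ∈ Finset.range (p - 1 - 1), (y i - y (i+1))^2 = 0 := by
    have h2 := sq_nonneg (y 0)
    have hSle : (∑ i ∈ Finset.range (p - 1 - 1), (y i - y (i+1))^2) ≤ 0 := by linarith
    have h4 : (∑ i ∈ Finset.range (p - 1 - 1), (y i - y (i+1))^2) = 0 :=
      le_antisymm hSle hS
    exact (Finset.sum_eq_zero_iff_of_nonneg fun j _ => sq_nonneg _).mp h4
  have hstep : ∀ i ∈ Finset.range (p - 1 - 1), y (i+1) = y i := by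
    intro i hi
    have h5 := hSz i hi
    have h6 : y i - y (i+1) = 0 := pow_eq_zero_iff (by norm_num) |>.mp h5
    linarith
  have hall : ∀ i, i < p - 1 → y i = 0 := by
    intro i
    induction i with
    | zero => intro _; exact h0
    | succ k ihk =>
      intro hk
      have hk' : k ∈ Finset.range (p - 1 - 1) := Finset.mem_range.mpr (by omega)
      rw [hstep k hk', ihk (by omega)]
  apply hx
  funext j
  have h7 := hall j.val j.isLt
  rw [hxy j, h7]
  rfl
end

section
/- The sublattice of ℤ^{1,14} (the odd unimodular lattice of signature (1,14) with basis h,e₁,…,e₁₄) spanned by u₁ = e₉−e₁₀, u₂ = e₁₀−e₁₁, u₃ = e₁₁−e₁₂, u₄ = e₁₂−e₁₃, u₅ = e₁₃−e₁₄, u₆ = 7h−3e₁−2e₂−⋯−2e₁₃−e₁₄ is a primitive sublattice of rank 6. -/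
/-- The class `u₆ = 7h - 3e₁ - 2e₂ - ⋯ - 2e₁₃ - e₁₄` in `ℤ^{1,14}`
(coordinate `0` is `h`, coordinate `i` is `eᵢ`). -/
def u₆ : Fin 15 → ℤ :=
  ![7, -3, -2, -2, -2, -2, -2, -2, -2, -2, -2, -2, -2, -2, -1]

/-- The classes `u₁ = e₉ - e₁₀, …, u₅ = e₁₃ - e₁₄`, and `u₆` as above. -/
def u : Fin 6 → Fin 15 → ℤ := fun i =>
  if h : i.val < 5 then
    Pi.single (⟨9 + i.val, by omega⟩ : Fin 15) 1
      - Pi.single (⟨10 + i.val, by omega⟩ : Fin 15) 1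
  else u₆

/-!
A family `v` admitting a dual family of functionals `g` (so `g (v i) = Pi.single i 1`) is
linearly independent, and its span is a direct summand, cut out as the image of the
projection `x ↦ ∑ i, g x i • v i`. Hence the span has rank `card ι` and, in a torsion-free
module, is saturated. For the `uᵢ`, such a dual family is exhibited by an integer matrix.
-/

namespace DualFamily

variable {R N ι : Type*} [CommRing R] [AddCommGroup N] [Module R N] [Fintype ι] [DecidableEq ι]
  {v : ι → N} {g : N →ₗ[R] ι → R}

lemma apply_sum_smul (hg : ∀ i, g (v i) = Pi.single i 1) (c : ι → R) :
    g (∑ i, c i • v i) = c := by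
  ext j
  simp [hg, Pi.single_apply]

lemma linearIndependent (hg : ∀ i, g (v i) = Pi.single i 1) : LinearIndependent R v :=
  .of_comp g <| by
    rw [show g ∘ v = Pi.basisFun R ι from funext fun i ↦ by simp [hg]]
    exact (Pi.basisFun R ι).linearIndependent

lemma finrank_span_eq_card [Nontrivial R] (hg : ∀ i, g (v i) = Pi.single i 1) :
    Module.finrank R (Submodule.span R (Set.range v)) = Fintype.card ι :=
  _root_.finrank_span_eq_card (linearIndependent hg)

lemma mem_span_of_smul_mem_span [IsDomain R] [Module.IsTorsionFree R N]
    (hg : ∀ i, g (v i) = Pi.single i 1) {x : N} {n : R} (hn : n ≠ 0)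
    (hnx : n • x ∈ Submodule.span R (Set.range v)) :
    x ∈ Submodule.span R (Set.range v) := by
  obtain ⟨c, hc⟩ := Submodule.mem_span_range_iff_exists_fun R |>.mp hnx
  have hc' : c = n • g x := by rw [← map_smul, ← hc, apply_sum_smul hg]
  refine Submodule.mem_span_range_iff_exists_fun R |>.mpr ⟨g x, smul_right_injective N hn ?_⟩
  simpa [Finset.smul_sum, smul_smul, hc'] using hc

end DualFamily

/-- Row `i` pairs with `u j` to `δᵢⱼ` under the coordinatewise dot product. -/
def uDual : Matrix (Fin 6) (Fin 15) ℤ :=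
  !![0, 9, -9, 0, 0, 0, 0, 0, 0, 0, -1, -1, -1, -1, -1;
     0, 7, -7, 0, 0, 0, 0, 0, 0, 0, 0, -1, -1, -1, -1;
     0, 5, -5, 0, 0, 0, 0, 0, 0, 0, 0, 0, -1, -1, -1;
     0, 3, -3, 0, 0, 0, 0, 0, 0, 0, 0, 0, 0, -1, -1;
     0, 1, -1, 0, 0, 0, 0, 0, 0, 0, 0, 0, 0, 0, -1;
     0, -1, 1, 0, 0, 0, 0, 0, 0, 0, 0, 0, 0, 0, 0]

lemma uDual_mulVecLin_u (i : Fin 6) : uDual.mulVecLin (u i) = Pi.single i 1 := by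
  revert i
  decide

/-- The sublattice of `ℤ^{1,14}` spanned by `u₁, …, u₆` is a primitive
sublattice of rank `6` (primitive: the quotient is torsion-free, i.e.
if a nonzero multiple of `x` lies in the sublattice then so does `x`). -/
theorem stmt5 :
    Module.finrank ℤ (Submodule.span ℤ (Set.range u)) = 6 ∧
    ∀ (x : Fin 15 → ℤ) (n : ℤ), n ≠ 0 →
      n • x ∈ Submodule.span ℤ (Set.range u) →
      x ∈ Submodule.span ℤ (Set.range u) :=
  ⟨DualFamily.finrank_span_eq_card uDual_mulVecLin_u,
    fun _ _ hn ↦ DualFamily.mem_span_of_smul_mem_span uDual_mulVecLin_u hn⟩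
end

section
/- For any integer p ≥ 2, the abelian group ℤ^{p−1}/A ℤ^{p−1}, where A is the (p−1)×(p−1) matrix with diagonal (−2,…,−2,−p−2) and off-diagonal neighbor entries 1, is cyclic of order p². -/
namespace Stmt14Aux

lemma sum_ite_val {n : ℕ} (t : ℕ) (f : Fin n → ℤ) :
    (∑ i : Fin n, if (i : ℕ) = t then f i else 0) = if h : t < n then f ⟨t, h⟩ else 0 := by
  split_ifs with h
  · have : ∀ i : Fin n, ((i : ℕ) = t) = (i = ⟨t, h⟩) := fun i => by
      simp [Fin.ext_iff]
    simp only [this]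
    simp
  · apply Finset.sum_eq_zero; intro i _; rw [if_neg]; omega

lemma colsum (p : ℕ) (hp : 2 ≤ p) (j : Fin (p - 1)) :
    (∑ i : Fin (p - 1), ((i : ℤ) + 1) * Cmatrix p i j)
      = if (j : ℕ) = p - 2 then -(p : ℤ) ^ 2 else 0 := by
  have hsplit : ∀ i : Fin (p - 1), ((i : ℤ) + 1) * Cmatrix p i j
      = (if (i : ℕ) = (j : ℕ) then
          ((i : ℤ) + 1) * (if (i : ℕ) = p - 2 then -(p : ℤ) - 2 else -2) else 0)
        + (if 1 ≤ (j : ℕ) then (if (i : ℕ) = (j : ℕ) - 1 then (i : ℤ) + 1 else 0) else 0)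
        + (if (i : ℕ) = (j : ℕ) + 1 then (i : ℤ) + 1 else 0) := by
    intro i
    simp only [Cmatrix, Matrix.of_apply, Fin.ext_iff]
    split_ifs <;> first | omega | ring1 | (exfalso; omega)
  rw [Finset.sum_congr rfl (fun i _ => hsplit i)]
  rw [Finset.sum_add_distrib, Finset.sum_add_distrib, sum_ite_val, sum_ite_val]
  rw [dif_pos j.isLt]
  by_cases hlast : (j : ℕ) = p - 2
  · rw [if_pos hlast]
    rw [if_pos (show ((⟨(j : ℕ), j.isLt⟩ : Fin (p-1)) : ℕ) = p - 2 from hlast)]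
    rw [dif_neg (show ¬ ((j : ℕ) + 1 < p - 1) by omega)]
    by_cases hj1 : 1 ≤ (j : ℕ)
    · simp only [if_pos hj1]
      rw [sum_ite_val, dif_pos (show (j : ℕ) - 1 < p - 1 by omega)]
      have hc : ((j : ℕ) : ℤ) = (p : ℤ) - 2 := by omega
      push_cast [Nat.cast_sub hj1]
      rw [hc]; ring
    · simp only [if_neg hj1, Finset.sum_const_zero]
      have hp2 : p = 2 := by omega
      subst hp2
      have hc : ((j : ℕ) : ℤ) = 0 := by omega
      push_cast
      rw [hc]; norm_num
  · rw [if_neg hlast]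
    rw [if_neg (show ¬ ((⟨(j : ℕ), j.isLt⟩ : Fin (p-1)) : ℕ) = p - 2 from hlast)]
    rw [dif_pos (show (j : ℕ) + 1 < p - 1 by omega)]
    by_cases hj1 : 1 ≤ (j : ℕ)
    · simp only [if_pos hj1]
      rw [sum_ite_val, dif_pos (show (j : ℕ) - 1 < p - 1 by omega)]
      push_cast [Nat.cast_sub hj1]
      ring
    · simp only [if_neg hj1, Finset.sum_const_zero]
      have hc : ((j : ℕ) : ℤ) = 0 := by omega
      push_cast
      rw [hc]; ring

/-- The explicit integral solution of `A y = -p² e₀`. -/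
def yvec (p : ℕ) : Fin (p - 1) → ℤ := fun j => ((p : ℤ) + 1) * ((p : ℤ) - 2 - ((j : ℕ) : ℤ)) + 1

lemma rowsum (p : ℕ) (hp : 2 ≤ p) (i : Fin (p - 1)) :
    (∑ j : Fin (p - 1), Cmatrix p i j * yvec p j)
      = if (i : ℕ) = 0 then -(p : ℤ) ^ 2 else 0 := by
  have hsplit : ∀ j : Fin (p - 1), Cmatrix p i j * yvec p j
      = (if (j : ℕ) = (i : ℕ) then
          (if (i : ℕ) = p - 2 then -(p : ℤ) - 2 else -2) * yvec p j else 0)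
        + (if 1 ≤ (i : ℕ) then (if (j : ℕ) = (i : ℕ) - 1 then yvec p j else 0) else 0)
        + (if (j : ℕ) = (i : ℕ) + 1 then yvec p j else 0) := by
    intro j
    simp only [Cmatrix, Matrix.of_apply, Fin.ext_iff]
    split_ifs <;> first | omega | ring1 | (exfalso; omega)
  rw [Finset.sum_congr rfl (fun j _ => hsplit j)]
  rw [Finset.sum_add_distrib, Finset.sum_add_distrib, sum_ite_val, sum_ite_val]
  rw [dif_pos i.isLt]
  by_cases h0 : (i : ℕ) = 0
  · rw [if_pos h0]
    simp only [if_neg (show ¬ 1 ≤ (i : ℕ) by omega), Finset.sum_const_zero]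
    by_cases hlast : (i : ℕ) = p - 2
    · have hp2 : p = 2 := by omega
      subst hp2
      rw [if_pos hlast, dif_neg (show ¬ ((i : ℕ) + 1 < 2 - 1) by omega)]
      have hc : ((i : ℕ) : ℤ) = 0 := by omega
      simp only [yvec, hc]
      norm_num
    · rw [if_neg hlast, dif_pos (show (i : ℕ) + 1 < p - 1 by omega)]
      have hc : ((i : ℕ) : ℤ) = 0 := by omega
      simp only [yvec, Fin.val_mk]
      push_cast
      rw [hc]; ring
  · rw [if_neg h0]
    simp only [if_pos (show 1 ≤ (i : ℕ) by omega)]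
    rw [sum_ite_val, dif_pos (show (i : ℕ) - 1 < p - 1 by omega)]
    by_cases hlast : (i : ℕ) = p - 2
    · rw [if_pos hlast, dif_neg (show ¬ ((i : ℕ) + 1 < p - 1) by omega)]
      have hc : ((i : ℕ) : ℤ) = (p : ℤ) - 2 := by omega
      simp only [yvec, Fin.val_mk]
      push_cast [Nat.cast_sub (show 1 ≤ (i : ℕ) by omega)]
      rw [hc]; ring
    · rw [if_neg hlast, dif_pos (show (i : ℕ) + 1 < p - 1 by omega)]
      simp only [yvec, Fin.val_mk]
      push_cast [Nat.cast_sub (show 1 ≤ (i : ℕ) by omega)]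
      ring

variable (p : ℕ)

/-- The linear functional `x ↦ ∑ (i+1) xᵢ` into `ZMod p²`. -/
def phi : (Fin (p - 1) → ℤ) →ₗ[ℤ] ZMod (p ^ 2) where
  toFun x := ((∑ i : Fin (p - 1), ((i : ℤ) + 1) * x i : ℤ) : ZMod (p ^ 2))
  map_add' x y := by
    simp only [Pi.add_apply, mul_add, Finset.sum_add_distrib, Int.cast_add]
  map_smul' c x := by
    simp only [Pi.smul_apply, smul_eq_mul, RingHom.id_apply]
    rw [show (∑ i : Fin (p - 1), ((i : ℤ) + 1) * (c * x i))
        = c * ∑ i : Fin (p - 1), ((i : ℤ) + 1) * x i by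
      rw [Finset.mul_sum]; exact Finset.sum_congr rfl fun i _ => by ring]
    rw [Int.cast_mul, zsmul_eq_mul]

lemma phi_apply (x : Fin (p - 1) → ℤ) :
    phi p x = ((∑ i : Fin (p - 1), ((i : ℤ) + 1) * x i : ℤ) : ZMod (p ^ 2)) := rfl

lemma phi_toLin' (hp : 2 ≤ p) (x : Fin (p - 1) → ℤ) :
    phi p (Matrix.toLin' (Cmatrix p) x) = 0 := by
  show ((∑ i : Fin (p - 1), ((i : ℤ) + 1) * (Matrix.toLin' (Cmatrix p) x) i : ℤ) : ZMod (p ^ 2)) = 0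
  have h1 : (∑ i : Fin (p - 1), ((i : ℤ) + 1) * (Matrix.toLin' (Cmatrix p) x) i)
      = ∑ j : Fin (p - 1), (∑ i : Fin (p - 1), ((i : ℤ) + 1) * Cmatrix p i j) * x j := by
    simp only [Matrix.toLin'_apply, Matrix.mulVec, dotProduct, Finset.mul_sum,
      Finset.sum_mul]
    rw [Finset.sum_comm]
    exact Finset.sum_congr rfl fun j _ => Finset.sum_congr rfl fun i _ => by ring
  rw [h1]
  rw [Finset.sum_congr rfl (fun j _ => by rw [colsum p hp j])]
  push_cast
  apply Finset.sum_eq_zero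
  intro j _
  split_ifs
  · have : ((p : ZMod (p ^ 2))) ^ 2 = 0 := by
      rw [← Nat.cast_pow, ZMod.natCast_self]
    rw [this]; ring
  · ring

variable {p}

/-- Generation: the class of the `m`-th basis vector is `(m+1)` times the class
of the `0`-th one. -/
lemma gen (hp : 2 ≤ p) (h0 : 0 < p - 1) : ∀ m : ℕ, ∀ h : m < p - 1,
    (LinearMap.range (Matrix.toLin' (Cmatrix p))).mkQ (Pi.single (⟨m, h⟩ : Fin (p - 1)) 1)
      = ((m : ℤ) + 1) •
        (LinearMap.range (Matrix.toLin' (Cmatrix p))).mkQ (Pi.single (⟨0, h0⟩ : Fin (p - 1)) 1) := by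
  set π := (LinearMap.range (Matrix.toLin' (Cmatrix p))).mkQ with hπ
  have hcol0 : ∀ k : ℕ, ∀ hk : k < p - 2,
      π (fun i => Cmatrix p i ⟨k, by omega⟩) = 0 := by
    intro k hk
    rw [hπ, Submodule.mkQ_apply, Submodule.Quotient.mk_eq_zero]
    refine ⟨Pi.single ⟨k, by omega⟩ 1, ?_⟩
    rw [Matrix.toLin'_apply, Matrix.mulVec_single]
    funext i; simp
  intro m
  induction m using Nat.strong_induction_on with
  | _ m IH =>
    match m with
    | 0 => intro h; simp
    | 1 =>
      intro h
      have hc := hcol0 0 (by omega)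
      have hexp : (fun i => Cmatrix p i (⟨0, by omega⟩ : Fin (p - 1)))
          = Pi.single (⟨0, h0⟩ : Fin (p - 1)) (-2) + Pi.single (⟨1, h⟩ : Fin (p - 1)) 1 := by
        funext i
        simp only [Cmatrix, Matrix.of_apply, Pi.add_apply, Pi.single_apply, Fin.ext_iff]
        split_ifs <;> (try simp only [false_or, or_false] at *) <;> omega
      rw [hexp, map_add] at hc
      rw [show Pi.single (⟨0, h0⟩ : Fin (p - 1)) (-2 : ℤ)
          = ((-2 : ℤ) • Pi.single (⟨0, h0⟩ : Fin (p - 1)) (1 : ℤ) : Fin (p-1) → ℤ) by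
        rw [← Pi.single_smul, smul_eq_mul, mul_one]] at hc
      rw [map_smul] at hc
      rw [add_comm, add_eq_zero_iff_eq_neg] at hc
      rw [hc, ← neg_smul]
      all_goals norm_num
    | (k' + 2) =>
      intro h
      have hc := hcol0 (k' + 1) (by omega)
      have hexp : (fun i => Cmatrix p i (⟨k' + 1, by omega⟩ : Fin (p - 1)))
          = Pi.single (⟨k', by omega⟩ : Fin (p - 1)) 1
            + Pi.single (⟨k' + 1, by omega⟩ : Fin (p - 1)) (-2)
            + Pi.single (⟨k' + 2, h⟩ : Fin (p - 1)) 1 := by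
        funext i
        simp only [Cmatrix, Matrix.of_apply, Pi.add_apply, Pi.single_apply, Fin.ext_iff]
        split_ifs <;> (try simp only [false_or, or_false] at *) <;> omega
      rw [hexp, map_add, map_add] at hc
      rw [show Pi.single (⟨k' + 1, by omega⟩ : Fin (p - 1)) (-2 : ℤ)
          = ((-2 : ℤ) • Pi.single (⟨k' + 1, by omega⟩ : Fin (p - 1)) (1 : ℤ) : Fin (p-1) → ℤ) by
        rw [← Pi.single_smul, smul_eq_mul, mul_one]] at hc
      rw [map_smul] at hc
      rw [IH k' (by omega) (by omega), IH (k' + 1) (by omega) (by omega)] at hc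
      rw [add_comm, add_eq_zero_iff_eq_neg] at hc
      rw [hc, smul_smul, ← add_smul, ← neg_smul]
      all_goals (congr 1; push_cast; ring)

/-- Every class is the corresponding multiple of the class of `e₀`. -/
lemma key (hp : 2 ≤ p) (h0 : 0 < p - 1) (x : Fin (p - 1) → ℤ) :
    (LinearMap.range (Matrix.toLin' (Cmatrix p))).mkQ x
      = (∑ i : Fin (p - 1), ((i : ℤ) + 1) * x i) •
        (LinearMap.range (Matrix.toLin' (Cmatrix p))).mkQ (Pi.single (⟨0, h0⟩ : Fin (p - 1)) 1) := by
  set π := (LinearMap.range (Matrix.toLin' (Cmatrix p))).mkQ with hπ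
  have hterm : ∀ i : Fin (p - 1), π (Pi.single i (x i))
      = (((i : ℤ) + 1) * x i) • π (Pi.single (⟨0, h0⟩ : Fin (p - 1)) 1) := by
    intro i
    have h1 : Pi.single i (x i) = (x i • Pi.single i (1 : ℤ) : Fin (p - 1) → ℤ) := by
      rw [← Pi.single_smul, smul_eq_mul, mul_one]
    rw [h1, map_smul]
    have h2 := gen hp h0 (i : ℕ) i.isLt
    rw [Fin.eta] at h2
    rw [h2, smul_smul]
    congr 1
    ring
  calc π x = π (∑ i : Fin (p - 1), Pi.single i (x i)) := by rw [Finset.univ_sum_single]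
    _ = ∑ i : Fin (p - 1), π (Pi.single i (x i)) := map_sum π _ _
    _ = ∑ i : Fin (p - 1), (((i : ℤ) + 1) * x i) • π (Pi.single (⟨0, h0⟩ : Fin (p - 1)) 1) :=
        Finset.sum_congr rfl (fun i _ => hterm i)
    _ = (∑ i : Fin (p - 1), ((i : ℤ) + 1) * x i) • π (Pi.single (⟨0, h0⟩ : Fin (p - 1)) 1) :=
        (Finset.sum_smul).symm

lemma torsion (hp : 2 ≤ p) (h0 : 0 < p - 1) :
    ((p : ℤ) ^ 2) •
      (LinearMap.range (Matrix.toLin' (Cmatrix p))).mkQ (Pi.single (⟨0, h0⟩ : Fin (p - 1)) 1)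
      = 0 := by
  set π := (LinearMap.range (Matrix.toLin' (Cmatrix p))).mkQ with hπ
  have hy : Matrix.toLin' (Cmatrix p) (yvec p)
      = ((-(p : ℤ) ^ 2) • Pi.single (⟨0, h0⟩ : Fin (p - 1)) 1 : Fin (p - 1) → ℤ) := by
    rw [Matrix.toLin'_apply]
    funext i
    rw [show Matrix.mulVec (Cmatrix p) (yvec p) i
        = ∑ j : Fin (p - 1), Cmatrix p i j * yvec p j from rfl]
    rw [rowsum p hp i]
    simp only [Pi.smul_apply, Pi.single_apply, smul_eq_mul]
    by_cases hi : (i : ℕ) = 0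
    · rw [if_pos hi, if_pos (by rw [Fin.ext_iff]; exact hi), mul_one]
    · rw [if_neg hi, if_neg (by rw [Fin.ext_iff]; exact hi), mul_zero]
  have hz : π (Matrix.toLin' (Cmatrix p) (yvec p)) = 0 := by
    rw [hπ, Submodule.mkQ_apply, Submodule.Quotient.mk_eq_zero]
    exact ⟨yvec p, rfl⟩
  rw [hy, map_smul] at hz
  rw [show ((p : ℤ) ^ 2) = -(-(p : ℤ) ^ 2) by ring, neg_smul, hz, neg_zero]

end Stmt14Aux

open Stmt14Aux in
/-- For every integer `p ≥ 2`, the cokernel `ℤ^(p-1) / A ℤ^(p-1)` of the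
intersection matrix `A` of `C_p` is cyclic of order `p²`
(it is `H₁(∂C_p; ℤ) = H₁(L(p², p-1); ℤ)`). -/
theorem stmt14 (p : ℕ) (hp : 2 ≤ p) :
    ∃ g : (Fin (p - 1) → ℤ) ⧸ LinearMap.range (Matrix.toLin' (Cmatrix p)),
      (∀ x, ∃ n : ℤ, n • g = x) ∧
      Nat.card ((Fin (p - 1) → ℤ) ⧸ LinearMap.range (Matrix.toLin' (Cmatrix p)))
        = p ^ 2 := by
  have h0 : 0 < p - 1 := by omega
  set π := (LinearMap.range (Matrix.toLin' (Cmatrix p))).mkQ with hπ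
  refine ⟨π (Pi.single (⟨0, h0⟩ : Fin (p - 1)) 1), ?_, ?_⟩
  · intro x
    obtain ⟨v, rfl⟩ := Submodule.mkQ_surjective _ x
    exact ⟨∑ i : Fin (p - 1), ((i : ℤ) + 1) * v i, (key hp h0 v).symm⟩
  · haveI : NeZero (p ^ 2) := ⟨by positivity⟩
    have hker : LinearMap.range (Matrix.toLin' (Cmatrix p)) ≤ LinearMap.ker (phi p) := by
      rintro _ ⟨y, rfl⟩
      exact LinearMap.mem_ker.mpr (phi_toLin' p hp y)
    set φbar := Submodule.liftQ _ (phi p) hker with hφbar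
    have happ : ∀ w : Fin (p - 1) → ℤ, φbar (π w) = phi p w := by
      intro w
      rw [hφbar, hπ, Submodule.mkQ_apply, Submodule.liftQ_apply]
    have hone : phi p (Pi.single (⟨0, h0⟩ : Fin (p - 1)) 1) = 1 := by
      have hsum : (∑ i : Fin (p - 1),
          ((i : ℤ) + 1) * (Pi.single (⟨0, h0⟩ : Fin (p - 1)) (1 : ℤ) : Fin (p - 1) → ℤ) i) = 1 := by
        rw [Finset.sum_eq_single (⟨0, h0⟩ : Fin (p - 1))]
        · simp
        · intro b _ hb
          rw [Pi.single_eq_of_ne hb, mul_zero]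
        · intro habs
          exact absurd (Finset.mem_univ _) habs
      rw [phi_apply, hsum, Int.cast_one]
    have hsurj : Function.Surjective φbar := by
      intro z
      obtain ⟨k, rfl⟩ := ZMod.intCast_surjective z
      refine ⟨π (k • Pi.single (⟨0, h0⟩ : Fin (p - 1)) 1), ?_⟩
      rw [happ, map_smul, hone, zsmul_eq_mul, mul_one]
    have hinj : Function.Injective φbar := by
      intro a b hab
      obtain ⟨u, rfl⟩ := Submodule.mkQ_surjective _ a
      obtain ⟨v, rfl⟩ := Submodule.mkQ_surjective _ b
      have hphi : phi p (u - v) = 0 := by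
        rw [← happ, map_sub, map_sub, hab, sub_self]
      have hdvd : ((p ^ 2 : ℕ) : ℤ) ∣ ∑ i : Fin (p - 1), ((i : ℤ) + 1) * (u - v) i :=
        (ZMod.intCast_zmod_eq_zero_iff_dvd _ _).mp hphi
      obtain ⟨k, hk⟩ := hdvd
      have hz : π (u - v) = 0 := by
        rw [key hp h0 (u - v), hk]
        rw [show (((p ^ 2 : ℕ) : ℤ) * k) = k * (p : ℤ) ^ 2 by push_cast; ring]
        rw [mul_smul, torsion hp h0, smul_zero]
      have := sub_eq_zero.mp (by rw [← map_sub]; exact hz : π u - π v = 0)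
      exact this
    calc Nat.card ((Fin (p - 1) → ℤ) ⧸ LinearMap.range (Matrix.toLin' (Cmatrix p)))
        = Nat.card (ZMod (p ^ 2)) := Nat.card_congr (Equiv.ofBijective φbar ⟨hinj, hsurj⟩)
      _ = p ^ 2 := Nat.card_zmod _
end
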